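/- arXiv:1202.1165 — 2 statements merged into one kernel-verified Lean document; each statement's English description precedes it below -/
import Mathlib

section
/- Fix an integer n ≥ 2 and k ∈ ℤ. Let A ∈ U(n) and let e₁ ∈ ℂⁿ denote the first standard basis vector. Then (det A)ᵏ · (A e₁) = e₁ if and only if the following hold: A_{i1} = 0 and A_{1j} = 0 for all indices i, j ≠ 1 (so A is block diagonal with respect to the splitting of the first coordinate from the remaining n−1 coordinates), and the entry a = A_{11} together with the lower-right (n−1) × (n−1) block A′ of A satisfy a^{k+1} · (det A′)ᵏ = 1, equivalently a^{k+1} = \overline{(det A′)}ᵏ. In other words, the isotropy group at e₁ of the action of U(n) on the unit sphere of ℂⁿ given by A · v = (det A)ᵏ A v is exactly the set of such block matrices. -/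
/-!
Since `A e₁` is the first column of `A`, the equation `(det A)ᵏ A e₁ = e₁` says that this column
is `a e₁` with `(det A)ᵏ a = 1`. For a unitary `A`, the columns are orthonormal, so a first column
`a e₁` forces `|a| = 1` and orthogonality to the other columns kills the rest of the first row.
The matrix is then block diagonal, `det A = a det A′`, and `(det A)ᵏ a = a^{k+1} (det A′)ᵏ`.
-/

theorem smul_eq_single_one_iff {ι R : Type*} [DecidableEq ι] [CommMonoidWithZero R]
    (c : R) (v : ι → R) (z : ι) :
    c • v = Pi.single z 1 ↔ (∀ i ≠ z, v i = 0) ∧ c * v z = 1 := by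
  constructor
  · intro h
    have hz : c * v z = 1 := by simpa using congrFun h z
    refine ⟨fun i hi => ?_, hz⟩
    have hi' : c * v i = 0 := by simpa [Pi.single_eq_of_ne hi] using congrFun h i
    calc v i = (c * v z) * v i := by rw [hz, one_mul]
      _ = v z * (c * v i) := by rw [mul_comm c, mul_assoc]
      _ = 0 := by rw [hi', mul_zero]
  · rintro ⟨hv, hz⟩
    funext i
    by_cases hi : i = z
    · subst hi; simpa using hz
    · simp [Pi.single_eq_of_ne hi, hv i hi]

namespace Matrix

variable {ι R : Type*} [Fintype ι] [CommRing R]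

theorem star_mul_self_apply_of_col_eq_zero [StarRing R] (A : Matrix ι ι R) (z : ι)
    (h : ∀ i ≠ z, A i z = 0) (j : ι) :
    (star A * A) z j = star (A z z) * A z j := by
  rw [mul_apply]
  exact Finset.sum_eq_single z (fun i _ hi => by simp [h i hi]) (by simp)

variable [DecidableEq ι]

theorem det_eq_mul_det_submatrix_ne_of_col_eq_zero (A : Matrix ι ι R) (z : ι)
    (h : ∀ i ≠ z, A i z = 0) :
    A.det = A z z * (A.submatrix (fun i : {i // i ≠ z} => (i : ι))
      (fun j : {j // j ≠ z} => (j : ι))).det := by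
  have : Unique {i // i = z} := ⟨⟨⟨z, rfl⟩⟩, fun i => Subtype.ext i.2⟩
  let e : {i // i = z} ⊕ {i // i ≠ z} ≃ ι := Equiv.sumCompl (· = z)
  have hblocks : A.submatrix e e = fromBlocks (of fun _ _ => A z z) (A.submatrix (fun _ => z) (↑))
      0 (A.submatrix (↑) (↑)) := by
    ext (i | i) (j | j)
    · simp [e, i.2, j.2]
    · simp [e, i.2]
    · simp [e, j.2, h i i.2]
    · simp [e]
  rw [← det_submatrix_equiv_self e A, hblocks, det_fromBlocks_zero₂₁, det_unique]
  rfl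

variable [StarRing R]

theorem star_mul_self_eq_one_of_mem_unitaryGroup_of_col_eq_zero {A : Matrix ι ι R}
    (hA : A ∈ unitaryGroup ι R) (z : ι) (h : ∀ i ≠ z, A i z = 0) :
    star (A z z) * A z z = 1 := by
  rw [← star_mul_self_apply_of_col_eq_zero A z h, (mem_unitaryGroup_iff').1 hA, one_apply_eq]

theorem row_eq_zero_of_mem_unitaryGroup_of_col_eq_zero {A : Matrix ι ι R}
    (hA : A ∈ unitaryGroup ι R) (z : ι) (h : ∀ i ≠ z, A i z = 0) :
    ∀ j ≠ z, A z j = 0 := by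
  intro j hj
  have horth : star (A z z) * A z j = 0 := by
    rw [← star_mul_self_apply_of_col_eq_zero A z h, (mem_unitaryGroup_iff').1 hA,
      one_apply_ne hj.symm]
  calc A z j = (star (A z z) * A z z) * A z j := by
        rw [star_mul_self_eq_one_of_mem_unitaryGroup_of_col_eq_zero hA z h, one_mul]
    _ = A z z * (star (A z z) * A z j) := by ring
    _ = 0 := by rw [horth, mul_zero]

end Matrix

/-- Appendix A.3: the isotropy group at `e₁` of the action of `U(n)` on the unit sphere of `ℂⁿ`
given by `A · v = (det A)ᵏ A v` consists exactly of the block-diagonal matrices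
`diag(a, A′)` with `a^{k+1} (det A′)ᵏ = 1`. -/
theorem isotropy_of_det_twisted_action (n : ℕ) (hn : 2 ≤ n) (k : ℤ)
    (A : Matrix (Fin n) (Fin n) ℂ) (hA : A ∈ Matrix.unitaryGroup (Fin n) ℂ) :
    (A.det ^ k) • A.mulVec (Pi.single (⟨0, by omega⟩ : Fin n) (1 : ℂ))
        = Pi.single (⟨0, by omega⟩ : Fin n) (1 : ℂ) ↔
      ((∀ i : Fin n, i ≠ ⟨0, by omega⟩ → A i ⟨0, by omega⟩ = 0) ∧
        (∀ j : Fin n, j ≠ ⟨0, by omega⟩ → A ⟨0, by omega⟩ j = 0) ∧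
        (A ⟨0, by omega⟩ ⟨0, by omega⟩) ^ (k + 1) *
          (A.submatrix (fun i : {i : Fin n // i ≠ ⟨0, by omega⟩} => (i : Fin n))
            (fun j : {j : Fin n // j ≠ ⟨0, by omega⟩} => (j : Fin n))).det ^ k = 1) := by
  set z : Fin n := ⟨0, by omega⟩
  rw [Matrix.mulVec_single_one, smul_eq_single_one_iff]
  refine and_congr_right fun hcol => ?_
  have ha : A z z ≠ 0 := right_ne_zero_of_mul_eq_one
    (Matrix.star_mul_self_eq_one_of_mem_unitaryGroup_of_col_eq_zero hA z hcol)
  rw [and_iff_right (Matrix.row_eq_zero_of_mem_unitaryGroup_of_col_eq_zero hA z hcol),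
    Matrix.det_eq_mul_det_submatrix_ne_of_col_eq_zero A z hcol, mul_zpow, zpow_add_one₀ ha,
    mul_right_comm]
  rfl
end

section
/- The normalizer of SO(3) in SU(3) equals SO(3)·Z(SU(3)); that is, an element A ∈ SU(3) satisfies A · SO(3) · A⁻¹ = SO(3) if and only if A = ω·O for some O ∈ SO(3) and some ω ∈ ℂ with ω³ = 1. -/
/-!
If `A ∈ SU(3)` normalizes `SO(3)`, then for every rotation `N` the matrix `A N A⁻¹` is real, so it
equals its complex conjugate `Ā N Ā⁻¹`. Hence `A⁻¹ Ā` centralizes `SO(3)`; commuting with the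
quarter turns about two coordinate axes already forces it to be a scalar `c`. Thus `Ā = c A`,
taking determinants gives `c³ = 1`, and `c² A` is then a real unitary matrix of determinant one,
so `A = c • O` with `O ∈ SO(3)`. Conversely, conjugation by `ω • O` is conjugation by `O`, which
preserves `SO(3)`.
-/

open Matrix Complex

lemma Complex.mem_unitary_of_pow_eq_one {ω : ℂ} {k : ℕ} (h : ω ^ k = 1) (hk : k ≠ 0) :
    ω ∈ unitary ℂ := by
  rw [Unitary.mem_iff_star_mul_self, star_def, conj_mul', norm_eq_one_of_pow_eq_one h hk]
  norm_num

namespace Matrix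

section ofReal

variable {m n : Type*}

lemma map_conj_map_ofReal (O : Matrix m n ℝ) :
    (O.map ofReal).map (starRingEnd ℂ) = O.map ofReal := by
  ext; simp

lemma exists_map_ofReal_eq_of_map_conj_eq {M : Matrix m n ℂ}
    (hM : M.map (starRingEnd ℂ) = M) : ∃ O : Matrix m n ℝ, O.map ofReal = M :=
  ⟨M.map re, by ext i j; exact conj_eq_iff_re.mp (congrFun (congrFun hM i) j)⟩

lemma conjTranspose_map_ofReal (O : Matrix m n ℝ) : (O.map ofReal)ᴴ = Oᵀ.map ofReal := by
  ext; simp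

lemma map_ofReal_mul {l : Type*} [Fintype m] (P : Matrix l m ℝ) (Q : Matrix m n ℝ) :
    (P * Q).map ofReal = P.map ofReal * Q.map ofReal :=
  Matrix.map_mul (f := ofRealHom)

lemma map_ofReal_one [DecidableEq n] : (1 : Matrix n n ℝ).map ofReal = 1 :=
  Matrix.map_one _ ofReal_zero ofReal_one

end ofReal

variable {n : Type*} [Fintype n] [DecidableEq n]

abbrev realSpecialOrthogonal (n : Type*) [Fintype n] [DecidableEq n] : Set (Matrix n n ℂ) :=
  (Matrix.map · ofReal) '' specialOrthogonalGroup n ℝ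

lemma setOf_eq_realSpecialOrthogonal :
    {M : Matrix n n ℂ | ∃ O : Matrix n n ℝ,
      O ∈ orthogonalGroup n ℝ ∧ O.det = 1 ∧ M = O.map ofReal} = realSpecialOrthogonal n := by
  ext M
  simp [mem_specialOrthogonalGroup_iff, eq_comm, and_assoc]

lemma det_map_ofReal (O : Matrix n n ℝ) : (O.map ofReal).det = O.det :=
  (RingHom.map_det ofRealHom O).symm

lemma map_ofReal_mem_specialUnitaryGroup_iff {O : Matrix n n ℝ} :
    O.map ofReal ∈ specialUnitaryGroup n ℂ ↔ O ∈ specialOrthogonalGroup n ℝ := by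
  rw [mem_specialUnitaryGroup_iff, mem_specialOrthogonalGroup_iff, mem_unitaryGroup_iff',
    mem_orthogonalGroup_iff', star_eq_conjTranspose, conjTranspose_map_ofReal, det_map_ofReal,
    ofReal_eq_one, ← map_ofReal_mul, ← map_ofReal_one,
    (map_injective ofReal_injective).eq_iff]

lemma transpose_mem_specialOrthogonalGroup {R : Type*} [CommRing R] {O : Matrix n n R}
    (hO : O ∈ specialOrthogonalGroup n R) : Oᵀ ∈ specialOrthogonalGroup n R := by
  rw [mem_specialOrthogonalGroup_iff, mem_orthogonalGroup_iff, transpose_transpose, det_transpose]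
  exact ⟨(mem_orthogonalGroup_iff' n R).1 hO.1, hO.2⟩

lemma image_conj_specialOrthogonalGroup {R : Type*} [CommRing R] {O : Matrix n n R}
    (hO : O ∈ specialOrthogonalGroup n R) :
    (fun P => O * P * Oᵀ) '' specialOrthogonalGroup n R = specialOrthogonalGroup n R := by
  have hOt := transpose_mem_specialOrthogonalGroup hO
  have hOOt : O * Oᵀ = 1 := (mem_orthogonalGroup_iff n R).1 hO.1
  refine subset_antisymm ?_ fun P hP => ⟨Oᵀ * P * O, ?_, ?_⟩
  · rintro _ ⟨P, hP, rfl⟩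
    exact mul_mem (mul_mem hO hP) hOt
  · exact mul_mem (mul_mem hOt hP) hO
  · show O * (Oᵀ * P * O) * Oᵀ = P
    rw [← Matrix.mul_assoc, ← Matrix.mul_assoc, hOOt, Matrix.one_mul, Matrix.mul_assoc, hOOt,
      Matrix.mul_one]

lemma inv_map_ofReal {O : Matrix n n ℝ} (hO : O ∈ orthogonalGroup n ℝ) :
    (O.map ofReal)⁻¹ = Oᵀ.map ofReal := by
  refine inv_eq_left_inv ?_
  rw [← map_ofReal_mul, (mem_orthogonalGroup_iff' n ℝ).1 hO, map_ofReal_one]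

lemma image_conj_realSpecialOrthogonal {U : Matrix n n ℂ} (hU : U ∈ realSpecialOrthogonal n) :
    (fun M => U * M * U⁻¹) '' realSpecialOrthogonal n = realSpecialOrthogonal n := by
  obtain ⟨O, hO, rfl⟩ := hU
  rw [inv_map_ofReal hO.1, Set.image_image]
  conv_rhs => rw [realSpecialOrthogonal, ← image_conj_specialOrthogonalGroup hO, Set.image_image]
  simp only [map_ofReal_mul]

lemma smul_mul_mul_inv_smul {K : Type*} [Field K] {ω : K} (hω : ω ≠ 0) {U : Matrix n n K}
    (hU : IsUnit U.det) (M : Matrix n n K) : ω • U * M * (ω • U)⁻¹ = U * M * U⁻¹ := by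
  have h : (ω • U)⁻¹ = ω⁻¹ • U⁻¹ :=
    inv_eq_left_inv (by simp [smul_smul, hω, nonsing_inv_mul _ hU])
  simp [h, smul_smul, hω]

lemma commute_inv_mul_map_conj {A N : Matrix n n ℂ} (hA : IsUnit A.det)
    (hN : N.map (starRingEnd ℂ) = N)
    (hAN : (A * N * A⁻¹).map (starRingEnd ℂ) = A * N * A⁻¹) :
    Commute (A⁻¹ * A.map (starRingEnd ℂ)) N := by
  set B := A.map (starRingEnd ℂ)
  have hB : A⁻¹.map (starRingEnd ℂ) * B = 1 := by
    rw [← Matrix.map_mul (f := starRingEnd ℂ), nonsing_inv_mul _ hA]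
    exact Matrix.map_one _ (map_zero _) (map_one _)
  rw [Matrix.map_mul (f := starRingEnd ℂ), Matrix.map_mul (f := starRingEnd ℂ), hN] at hAN
  calc A⁻¹ * B * N = A⁻¹ * (B * N * A⁻¹.map (starRingEnd ℂ)) * B := by
        simp only [Matrix.mul_assoc, hB, Matrix.mul_one]
    _ = N * (A⁻¹ * B) := by
        rw [hAN]
        simp only [← Matrix.mul_assoc, nonsing_inv_mul _ hA, Matrix.one_mul]

section rotations

variable (R : Type*) [CommRing R]

def rotZ : Matrix (Fin 3) (Fin 3) R := !![0, -1, 0; 1, 0, 0; 0, 0, 1]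

def rotX : Matrix (Fin 3) (Fin 3) R := !![1, 0, 0; 0, 0, -1; 0, 1, 0]

lemma rotZ_mem_specialOrthogonalGroup : rotZ R ∈ specialOrthogonalGroup (Fin 3) R := by
  rw [mem_specialOrthogonalGroup_iff, mem_orthogonalGroup_iff]
  refine ⟨?_, by simp [rotZ, det_fin_three]⟩
  ext i j
  fin_cases i <;> fin_cases j <;> simp [rotZ, mul_apply, Fin.sum_univ_three]

lemma rotX_mem_specialOrthogonalGroup : rotX R ∈ specialOrthogonalGroup (Fin 3) R := by
  rw [mem_specialOrthogonalGroup_iff, mem_orthogonalGroup_iff]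
  refine ⟨?_, by simp [rotX, det_fin_three]⟩
  ext i j
  fin_cases i <;> fin_cases j <;> simp [rotX, mul_apply, Fin.sum_univ_three]

variable {R} {S : Type*} [CommRing S]

lemma map_rotZ (f : R →+* S) : (rotZ R).map f = rotZ S := by
  ext i j; fin_cases i <;> fin_cases j <;> simp [rotZ]

lemma map_rotX (f : R →+* S) : (rotX R).map f = rotX S := by
  ext i j; fin_cases i <;> fin_cases j <;> simp [rotX]

end rotations

lemma eq_smul_one_of_commute_rotZ_of_commute_rotX {K : Type*} [Field K] [NeZero (2 : K)]
    {S : Matrix (Fin 3) (Fin 3) K} (hz : Commute S (rotZ K)) (hx : Commute S (rotX K)) :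
    S = S 0 0 • 1 := by
  have hz' (i j : Fin 3) : (S * rotZ K) i j = (rotZ K * S) i j := by rw [hz.eq]
  have hx' (i j : Fin 3) : (S * rotX K) i j = (rotX K * S) i j := by rw [hx.eq]
  have z00 : S 0 1 = -S 1 0 := by simpa [mul_apply, Fin.sum_univ_three, rotZ] using hz' 0 0
  have z01 : S 0 0 = S 1 1 := by simpa [mul_apply, Fin.sum_univ_three, rotZ] using hz' 0 1
  have z02 : S 0 2 = -S 1 2 := by simpa [mul_apply, Fin.sum_univ_three, rotZ] using hz' 0 2
  have z12 : S 1 2 = S 0 2 := by simpa [mul_apply, Fin.sum_univ_three, rotZ] using hz' 1 2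
  have z20 : S 2 1 = S 2 0 := by simpa [mul_apply, Fin.sum_univ_three, rotZ] using hz' 2 0
  have z21 : -S 2 0 = S 2 1 := by simpa [mul_apply, Fin.sum_univ_three, rotZ] using hz' 2 1
  have x01 : S 0 2 = S 0 1 := by simpa [mul_apply, Fin.sum_univ_three, rotX] using hx' 0 1
  have x12 : S 1 1 = S 2 2 := by simpa [mul_apply, Fin.sum_univ_three, rotX] using hx' 1 2
  have h02 : S 0 2 = 0 := mul_left_cancel₀ two_ne_zero (by linear_combination z02 - z12)
  have h20 : S 2 0 = 0 := mul_left_cancel₀ two_ne_zero (by linear_combination -z20 - z21)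
  have h21 : S 2 1 = 0 := mul_left_cancel₀ two_ne_zero (by linear_combination z20 - z21)
  have h12 : S 1 2 = 0 := by linear_combination z12 + h02
  have h01 : S 0 1 = 0 := by linear_combination -x01 + h02
  have h10 : S 1 0 = 0 := by linear_combination z00 - h01
  have h11 : S 1 1 = S 0 0 := by linear_combination -z01
  have h22 : S 2 2 = S 0 0 := by linear_combination -z01 - x12
  ext i j
  fin_cases i <;> fin_cases j <;> simp [h01, h02, h10, h12, h20, h21, h11, h22]

lemma exists_eq_smul_map_ofReal_of_map_conj_eq_smul {A : Matrix (Fin 3) (Fin 3) ℂ} {c : ℂ}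
    (hA : A ∈ specialUnitaryGroup (Fin 3) ℂ) (hc : A.map (starRingEnd ℂ) = c • A) :
    ∃ O ∈ specialOrthogonalGroup (Fin 3) ℝ, c ^ 3 = 1 ∧ A = c • O.map ofReal := by
  obtain ⟨hAu, hAdet⟩ := mem_specialUnitaryGroup_iff.1 hA
  have hc3 : c ^ 3 = 1 := by
    have h := congrArg det hc
    rwa [← RingHom.mapMatrix_apply, ← RingHom.map_det, hAdet, map_one, det_smul, hAdet,
      Fintype.card_fin, mul_one, eq_comm] at h
  have hc_conj : starRingEnd ℂ c = c ^ 2 := by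
    have h : starRingEnd ℂ c * c = 1 :=
      Unitary.star_mul_self_of_mem (mem_unitary_of_pow_eq_one hc3 three_ne_zero)
    linear_combination c ^ 2 * h - starRingEnd ℂ c * hc3
  obtain ⟨O, hO⟩ := exists_map_ofReal_eq_of_map_conj_eq (M := c ^ 2 • A) <| by
    have h : (c ^ 2 • A).map (starRingEnd ℂ) = starRingEnd ℂ c ^ 2 • A.map (starRingEnd ℂ) := by
      ext; simp
    rw [h, hc, hc_conj, smul_smul]
    congr 1
    linear_combination c ^ 2 * hc3
  refine ⟨O, map_ofReal_mem_specialUnitaryGroup_iff.1 ?_, hc3, ?_⟩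
  · rw [hO, mem_specialUnitaryGroup_iff, det_smul, hAdet, Fintype.card_fin]
    refine ⟨Unitary.smul_mem_of_mem (pow_mem (mem_unitary_of_pow_eq_one hc3 three_ne_zero) 2) hAu,
      ?_⟩
    linear_combination (c ^ 3 + 1) * hc3
  · rw [hO, smul_smul, ← pow_succ', hc3, one_smul]

end Matrix

/-- Section 4: the normalizer of `SO(3)` in `SU(3)` is `SO(3)·Z(SU(3))`: an `A ∈ SU(3)`
conjugates `SO(3)` onto itself iff `A = ω·O` with `O ∈ SO(3)` and `ω³ = 1`. -/
theorem normalizer_SO3_in_SU3 (A : Matrix (Fin 3) (Fin 3) ℂ)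
    (hA : A ∈ Matrix.specialUnitaryGroup (Fin 3) ℂ) :
    ((fun M => A * M * A⁻¹) ''
        {M : Matrix (Fin 3) (Fin 3) ℂ | ∃ O : Matrix (Fin 3) (Fin 3) ℝ,
          O ∈ Matrix.orthogonalGroup (Fin 3) ℝ ∧ O.det = 1 ∧ M = O.map (Complex.ofReal)}
        = {M : Matrix (Fin 3) (Fin 3) ℂ | ∃ O : Matrix (Fin 3) (Fin 3) ℝ,
          O ∈ Matrix.orthogonalGroup (Fin 3) ℝ ∧ O.det = 1 ∧ M = O.map (Complex.ofReal)}) ↔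
      ∃ (ω : ℂ) (O : Matrix (Fin 3) (Fin 3) ℝ), ω ^ 3 = 1 ∧
        O ∈ Matrix.orthogonalGroup (Fin 3) ℝ ∧ O.det = 1 ∧
        A = ω • O.map (Complex.ofReal) := by
  rw [setOf_eq_realSpecialOrthogonal]
  constructor
  · intro h
    have hdet : IsUnit A.det := by rw [(mem_specialUnitaryGroup_iff.1 hA).2]; exact isUnit_one
    have hreal : ∀ N ∈ realSpecialOrthogonal (Fin 3), N.map (starRingEnd ℂ) = N := by
      rintro _ ⟨O, -, rfl⟩
      exact map_conj_map_ofReal O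
    have hcomm : ∀ N ∈ realSpecialOrthogonal (Fin 3),
        Commute (A⁻¹ * A.map (starRingEnd ℂ)) N := fun N hN =>
      commute_inv_mul_map_conj hdet (hreal N hN) (hreal _ (h ▸ Set.mem_image_of_mem _ hN))
    have hscalar := eq_smul_one_of_commute_rotZ_of_commute_rotX
      (hcomm _ ⟨_, rotZ_mem_specialOrthogonalGroup ℝ, map_rotZ ofRealHom⟩)
      (hcomm _ ⟨_, rotX_mem_specialOrthogonalGroup ℝ, map_rotX ofRealHom⟩)
    obtain ⟨O, hO, hc3, hAO⟩ := exists_eq_smul_map_ofReal_of_map_conj_eq_smul hA <| by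
      rw [← mul_nonsing_inv_cancel_left A (A.map (starRingEnd ℂ)) hdet, hscalar, mul_smul_comm,
        Matrix.mul_one]
    exact ⟨_, O, hc3, hO.1, hO.2, hAO⟩
  · rintro ⟨ω, O, hω, hO, hOdet, rfl⟩
    have hω0 : ω ≠ 0 := by rintro rfl; norm_num at hω
    have hOdet' : IsUnit (O.map ofReal).det := by simp [det_map_ofReal, hOdet]
    simp_rw [smul_mul_mul_inv_smul hω0 hOdet']
    exact image_conj_realSpecialOrthogonal ⟨O, ⟨hO, hOdet⟩, rfl⟩
end
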